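/- arXiv:1906.05573 — 6 statements merged into one kernel-verified Lean document; each statement's English description precedes it below -/
import Mathlib

section
/- Let α : Fin n → Set (Σ × Fin n) be a nondeterministic automaton and suppose h : Σ* → Set (Fin n) satisfies the homomorphism equation h(v ++ w) = ⋃_{k ∈ h(w)} {i | i →_v k} for all words v, w. Then, setting F := h(ε) ⊆ Fin n, we have h(w) = {i | ∃ j ∈ F, i →_w j} for all words w; that is, every Eilenberg–Moore homomorphism from the free algebra on one generator to the dual of the saturation arises as the dual of the language map of the automaton (α, F) for some set F of final states. -/
/-- `Reach α x w y` means `x →_w y` in the nondeterministic automaton `α`. -/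
inductive Reach {σ X : Type*} (α : X → Set (σ × X)) : X → List σ → X → Prop
  | nil (x : X) : Reach α x [] x
  | cons {x y z : X} {a : σ} {w : List σ} :
      (a, y) ∈ α x → Reach α y w z → Reach α x (a :: w) z

/-- Every Eilenberg–Moore homomorphism from the free algebra on one generator to the
dual of the saturation arises as the dual of the language map of the automaton
`(α, F)` where `F := h ε`. -/
theorem stmt2 {σ : Type*} {n : ℕ} (α : Fin n → Set (σ × Fin n))
    (h : List σ → Set (Fin n))
    (hhom : ∀ v w : List σ, h (v ++ w) = ⋃ k ∈ h w, {i : Fin n | Reach α i v k}) :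
    ∀ w : List σ, h w = {i : Fin n | ∃ j ∈ h ([] : List σ), Reach α i w j} := by
  intro w
  ext i
  simpa using Set.ext_iff.mp (hhom w []) i
end

section
/- Let M be a monoid, X and Y sets, and let b : M × Y → Set Y be an Eilenberg–Moore algebra, i.e. b(1, y) = {y} and b(m·n, y) = ⋃_{z ∈ b(n, y)} b(m, z). Then a map h : M × X → Set Y satisfies the free-algebra homomorphism equation h(m·n, x) = ⋃_{y ∈ h(n, x)} b(m, y) for all m, n ∈ M, x ∈ X, if and only if there exists a map f : Y → Set X such that for all m ∈ M, x ∈ X, y ∈ Y: y ∈ h(m, x) ⟺ ∃ z ∈ Y, y ∈ b(m, z) ∧ x ∈ f(z). -/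
/-!
Every homomorphism `h` out of the free algebra is determined by its unit part: since `m = m * 1`,
`h (m, x)` is the `b`-image of `h (1, x)`, and `f` is the dual of `x ↦ h (1, x)`.
Conversely, `x ↦ ⋃ z ∈ g x, b (m, z)` is a homomorphism by the multiplication law of `b`.
-/

namespace KleisliAlgebra

variable {M X Y : Type*}

def IsFreeHom [Mul M] (b : M × Y → Set Y) (h : M × X → Set Y) : Prop :=
  ∀ (m n : M) (x : X), h (m * n, x) = ⋃ y ∈ h (n, x), b (m, y)

theorem exists_dual_iff (b : M × Y → Set Y) (h : M × X → Set Y) :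
    (∃ f : Y → Set X, ∀ (m : M) (x : X) (y : Y), y ∈ h (m, x) ↔ ∃ z : Y, y ∈ b (m, z) ∧ x ∈ f z) ↔
      ∃ g : X → Set Y, ∀ (m : M) (x : X), h (m, x) = ⋃ z ∈ g x, b (m, z) := by
  constructor
  · rintro ⟨f, hf⟩
    refine ⟨fun x => {z | x ∈ f z}, fun m x => Set.ext fun y => ?_⟩
    simp only [hf, Set.mem_iUnion, Set.mem_ofPred_eq, exists_prop, and_comm]
  · rintro ⟨g, hg⟩
    refine ⟨fun z => {x | z ∈ g x}, fun m x y => ?_⟩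
    simp only [hg, Set.mem_iUnion, Set.mem_ofPred_eq, exists_prop, and_comm]

theorem IsFreeHom.eq_biUnion_one [MulOneClass M] {b : M × Y → Set Y} {h : M × X → Set Y}
    (hh : IsFreeHom b h) (m : M) (x : X) : h (m, x) = ⋃ z ∈ h (1, x), b (m, z) := by
  simpa only [mul_one] using hh m 1 x

theorem isFreeHom_biUnion [Mul M] {b : M × Y → Set Y}
    (hb : ∀ (m n : M) (y : Y), b (m * n, y) = ⋃ z ∈ b (n, y), b (m, z)) (g : X → Set Y) :
    IsFreeHom b (fun p : M × X => ⋃ z ∈ g p.2, b (p.1, z)) := by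
  intro m n x
  simp only [hb, Set.biUnion_iUnion]

end KleisliAlgebra

theorem stmt3_general {M X Y : Type*} [Monoid M] (b : M × Y → Set Y)
    (hb2 : ∀ (m n : M) (y : Y), b (m * n, y) = ⋃ z ∈ b (n, y), b (m, z))
    (h : M × X → Set Y) :
    (∀ (m n : M) (x : X), h (m * n, x) = ⋃ y ∈ h (n, x), b (m, y)) ↔
    (∃ f : Y → Set X, ∀ (m : M) (x : X) (y : Y),
      y ∈ h (m, x) ↔ ∃ z : Y, y ∈ b (m, z) ∧ x ∈ f z) := by
  rw [KleisliAlgebra.exists_dual_iff]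
  constructor
  · intro hh
    exact ⟨fun x => h (1, x), KleisliAlgebra.IsFreeHom.eq_biUnion_one hh⟩
  · rintro ⟨g, hg⟩
    have hh : h = fun p : M × X => ⋃ z ∈ g p.2, b (p.1, z) := funext fun p => hg p.1 p.2
    exact hh ▸ KleisliAlgebra.isFreeHom_biUnion hb2 g

/-- A map `h : M × X → Set Y` is a homomorphism from the free Eilenberg–Moore algebra
on `X` to an Eilenberg–Moore algebra `b` iff it is of the form `Sf ∘ b_-` for some
`f : Y → Set X`. -/
theorem stmt3 {M X Y : Type*} [Monoid M] (b : M × Y → Set Y)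
    (hb1 : ∀ y : Y, b (1, y) = {y})
    (hb2 : ∀ (m n : M) (y : Y), b (m * n, y) = ⋃ z ∈ b (n, y), b (m, z))
    (h : M × X → Set Y) :
    (∀ (m n : M) (x : X), h (m * n, x) = ⋃ y ∈ h (n, x), b (m, y)) ↔
    (∃ f : Y → Set X, ∀ (m : M) (x : X) (y : Y),
      y ∈ h (m, x) ↔ ∃ z : Y, y ∈ b (m, z) ∧ x ∈ f z) :=
  stmt3_general b hb2 h
end

section
/- Regular maps form a subtheory of the Lawvere theory of the monad X ↦ Set (Σ* × X): (i) for every p, the Kleisli identity Fin p → Set (Σ* × Fin p), i ↦ {(ε, i)}, is regular; (ii) if r₁ : Fin p → Set (Σ* × Fin k) and r₂ : Fin k → Set (Σ* × Fin q) are regular, then their Kleisli composite (r₂ · r₁)(i) = {(v ++ w, j) | ∃ m, (v, m) ∈ r₁(i) ∧ (w, j) ∈ r₂(m)} is regular; (iii) if r : Fin p → Set (Σ* × Fin q) and r' : Fin p' → Set (Σ* × Fin q) are regular, then their cotuple Fin (p + p') → Set (Σ* × Fin q) (acting as r on the first p indices and as r' on the last p') is regular. -/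
/-- A map `r : Fin p → Set (Σ* × Fin q)` is regular if each of its components is
the behaviour of a state in a finite nondeterministic automaton. -/
def Regular {σ : Type*} {p q : ℕ} (r : Fin p → Set (List σ × Fin q)) : Prop :=
  ∀ i : Fin p, ∃ (n : ℕ) (α : Fin n → Set (σ × Fin n)) (s : Fin n)
    (χ : Fin n → Set (Fin q)),
      r i = {wj : List σ × Fin q | ∃ k : Fin n, Reach α s wj.1 k ∧ wj.2 ∈ χ k}

/-!
A behaviour is determined by two equations: `([], j)` is accepted from `s` iff `j ∈ χ s`, and
`(a :: w, j)` iff `(w, j)` is accepted from some `a`-successor of `s`; equalities of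
behaviours are proved by induction on the word from them. Identities come from an automaton
without transitions, and cotupling is immediate. For the Kleisli composite, the automata of the
components of `r₂` are placed side by side, and an automaton for `r₁ i` is concatenated with
them: a state that would output `m` may instead take the first step of the automaton for
`r₂ m`, so that the empty word needs no ε-transition.
-/

abbrev Automaton (σ X : Type*) := X → Set (σ × X)

def kleisliComp {σ K Q : Type*} (A : Set (List σ × K)) (B : K → Set (List σ × Q)) :
    Set (List σ × Q) :=
  {wj | ∃ (v w : List σ) (m : K), wj.1 = v ++ w ∧ (v, m) ∈ A ∧ (w, wj.2) ∈ B m}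

section kleisliComp

variable {σ K Q : Type*} {A : Set (List σ × K)} {B : K → Set (List σ × Q)} {j : Q}

theorem mem_kleisliComp_nil :
    ([], j) ∈ kleisliComp A B ↔ ∃ m, ([], m) ∈ A ∧ ([], j) ∈ B m := by
  simp [kleisliComp, eq_comm (a := ([] : List σ))]

theorem mem_kleisliComp_cons {a : σ} {w : List σ} :
    (a :: w, j) ∈ kleisliComp A B ↔
      (∃ m, ([], m) ∈ A ∧ (a :: w, j) ∈ B m) ∨
        ∃ (v w' : List σ) (m : K), w = v ++ w' ∧ (a :: v, m) ∈ A ∧ (w', j) ∈ B m := by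
  simp only [kleisliComp, Set.mem_ofPred_eq, List.cons_eq_append_iff]
  grind

end kleisliComp

namespace Automaton

variable {σ X Y Q : Type*}

def behaviour (α : Automaton σ X) (s : X) (χ : X → Set Q) : Set (List σ × Q) :=
  {wj | ∃ k, Reach α s wj.1 k ∧ wj.2 ∈ χ k}

section behaviour

variable {α : Automaton σ X} {s : X} {χ : X → Set Q} {j : Q}

theorem mem_behaviour_nil : ([], j) ∈ α.behaviour s χ ↔ j ∈ χ s := by
  constructor
  · rintro ⟨k, hreach, hj⟩
    cases hreach
    exact hj
  · exact fun hj => ⟨s, .nil s, hj⟩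

theorem mem_behaviour_cons {a : σ} {w : List σ} :
    (a :: w, j) ∈ α.behaviour s χ ↔ ∃ y, (a, y) ∈ α s ∧ (w, j) ∈ α.behaviour y χ := by
  constructor
  · rintro ⟨k, hreach, hj⟩
    cases hreach with
    | cons hy hreach => exact ⟨_, hy, k, hreach, hj⟩
  · rintro ⟨y, hy, k, hreach, hj⟩
    exact ⟨k, .cons hy hreach, hj⟩

end behaviour

theorem behaviour_eq_of_bisim {α : Automaton σ X} {β : Automaton σ Y} (f : X → Y)
    (hmap : ∀ {x a y}, (a, y) ∈ α x → (a, f y) ∈ β (f x))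
    (hlift : ∀ {x a y'}, (a, y') ∈ β (f x) → ∃ y, f y = y' ∧ (a, y) ∈ α x)
    (s : X) (χ : Y → Set Q) : β.behaviour (f s) χ = α.behaviour s (χ ∘ f) := by
  ext ⟨w, j⟩
  induction w generalizing s with
  | nil => simp only [mem_behaviour_nil, Function.comp_apply]
  | cons a w ih =>
    rw [mem_behaviour_cons, mem_behaviour_cons]
    constructor
    · rintro ⟨y', hy', hw⟩
      obtain ⟨y, rfl, hy⟩ := hlift hy'
      exact ⟨y, hy, (ih y).1 hw⟩
    · rintro ⟨y, hy, hw⟩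
      exact ⟨f y, hmap hy, (ih y).2 hw⟩

def comap (α : Automaton σ X) (f : Y → X) : Automaton σ Y :=
  fun y => {p | (p.1, f p.2) ∈ α (f y)}

theorem behaviour_comap (α : Automaton σ X) {f : Y → X} (hf : f.Surjective) (s : Y)
    (χ : X → Set Q) : α.behaviour (f s) χ = (α.comap f).behaviour s (χ ∘ f) :=
  behaviour_eq_of_bisim f id
    (fun {_ _ y'} h => (hf y').imp fun _ hy => ⟨hy, by simpa [comap, hy]⟩) s χ

theorem exists_fin_behaviour_eq [Finite X] (α : Automaton σ X) (s : X) (χ : X → Set Q) :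
    ∃ (n : ℕ) (β : Automaton σ (Fin n)) (t : Fin n) (ψ : Fin n → Set Q),
      α.behaviour s χ = β.behaviour t ψ := by
  obtain ⟨n, ⟨e⟩⟩ := Finite.exists_equiv_fin X
  refine ⟨n, α.comap e.symm, e s, χ ∘ e.symm, ?_⟩
  simpa using α.behaviour_comap e.symm.surjective (e s) χ

def sigma {ι : Type*} {Y : ι → Type*} (α : ∀ i, Automaton σ (Y i)) :
    Automaton σ (Σ i, Y i) :=
  fun x => {p | ∃ y, (p.1, y) ∈ α x.1 x.2 ∧ p.2 = ⟨x.1, y⟩}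

theorem behaviour_sigma {ι : Type*} {Y : ι → Type*} (α : ∀ i, Automaton σ (Y i)) (i : ι)
    (s : Y i) (χ : (Σ i, Y i) → Set Q) :
    (sigma α).behaviour ⟨i, s⟩ χ = (α i).behaviour s (χ ∘ Sigma.mk i) :=
  behaviour_eq_of_bisim (α := α i) (β := sigma α) (Sigma.mk i) (fun hy => ⟨_, hy, rfl⟩)
    (fun ⟨y, hy, hp⟩ => ⟨y, hp.symm, hy⟩) s χ

section concat

variable {K : Type*} (α : Automaton σ X) (χ : X → Set K) (β : Automaton σ Y) (t : K → Y)
  (ψ : Y → Set Q)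

def concat : Automaton σ (X ⊕ Y)
  | .inl x => {p | (∃ y, (p.1, y) ∈ α x ∧ p.2 = .inl y) ∨
      ∃ m ∈ χ x, ∃ y, (p.1, y) ∈ β (t m) ∧ p.2 = .inr y}
  | .inr y => {p | ∃ y', (p.1, y') ∈ β y ∧ p.2 = .inr y'}

def concatOutput : X ⊕ Y → Set Q :=
  Sum.elim (fun x => {j | ∃ m ∈ χ x, j ∈ ψ (t m)}) ψ

variable {α χ β t} in
theorem mem_concat_inl_inl {a : σ} {x y : X} :
    (a, .inl y) ∈ concat α χ β t (.inl x) ↔ (a, y) ∈ α x := by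
  simp [concat]

variable {α χ β t} in
theorem mem_concat_inl_inr {a : σ} {x : X} {y : Y} :
    (a, .inr y) ∈ concat α χ β t (.inl x) ↔ ∃ m ∈ χ x, (a, y) ∈ β (t m) := by
  simp [concat]

theorem behaviour_concat_inr (y : Y) :
    (concat α χ β t).behaviour (.inr y) (concatOutput χ t ψ) = β.behaviour y ψ :=
  behaviour_eq_of_bisim (α := β) (β := concat α χ β t) Sum.inr (fun hy => ⟨_, hy, rfl⟩)
    (fun ⟨y, hy, hp⟩ => ⟨y, hp.symm, hy⟩) y _

theorem behaviour_concat_inl (x : X) :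
    (concat α χ β t).behaviour (.inl x) (concatOutput χ t ψ) =
      kleisliComp (α.behaviour x χ) (fun m => β.behaviour (t m) ψ) := by
  ext ⟨w, j⟩
  induction w generalizing x with
  | nil => simp [mem_behaviour_nil, mem_kleisliComp_nil, concatOutput]
  | cons a w ih =>
    rw [mem_behaviour_cons, mem_kleisliComp_cons, Sum.exists, or_comm]
    simp only [mem_concat_inl_inl, mem_concat_inl_inr, behaviour_concat_inr, ih, kleisliComp,
      mem_behaviour_nil, mem_behaviour_cons, Set.mem_ofPred_eq]
    exact or_congr (by grind) (by grind)

end concat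

end Automaton

open Automaton

section Regular

variable {σ : Type*} {p q : ℕ}

theorem regular_singleton_nil (p : ℕ) :
    Regular (fun i : Fin p => ({([], i)} : Set (List σ × Fin p))) := by
  intro i
  refine ⟨1, fun _ => ∅, 0, fun _ => {i}, ?_⟩
  ext ⟨w, j⟩
  change _ ↔ (w, j) ∈ behaviour _ _ _
  cases w with
  | nil => simp [mem_behaviour_nil, eq_comm]
  | cons a w => simp [mem_behaviour_cons]

theorem Regular.exists_automaton {r : Fin p → Set (List σ × Fin q)} (h : Regular r) :
    ∃ (Y : Type) (_ : Finite Y) (β : Automaton σ Y) (t : Fin p → Y) (ψ : Y → Set (Fin q)),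
      ∀ i, r i = β.behaviour (t i) ψ := by
  choose n α s χ hr using h
  refine ⟨Σ i, Fin (n i), inferInstance, sigma α, fun i => ⟨i, s i⟩, fun x => χ x.1 x.2,
    fun i => ?_⟩
  rw [behaviour_sigma]
  exact hr i

theorem Regular.kleisliComp {k : ℕ} {r₁ : Fin p → Set (List σ × Fin k)}
    {r₂ : Fin k → Set (List σ × Fin q)} (h₁ : Regular r₁) (h₂ : Regular r₂) :
    Regular (fun i => _root_.kleisliComp (r₁ i) r₂) := by
  intro i
  obtain ⟨n, α, s, χ, hr₁⟩ := h₁ i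
  obtain ⟨Y, _, β, t, ψ, hr₂⟩ := h₂.exists_automaton
  obtain ⟨N, γ, u, φ, hγ⟩ :=
    exists_fin_behaviour_eq (concat α χ β t) (.inl s) (concatOutput χ t ψ)
  refine ⟨N, γ, u, φ, ?_⟩
  change _root_.kleisliComp (r₁ i) r₂ = γ.behaviour u φ
  rw [← hγ, behaviour_concat_inl, funext hr₂, hr₁]
  rfl

theorem Regular.addCases {p' : ℕ} {r : Fin p → Set (List σ × Fin q)}
    {r' : Fin p' → Set (List σ × Fin q)} (h : Regular r) (h' : Regular r') :
    Regular (fun i : Fin (p + p') => Fin.addCases r r' i) := by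
  intro i
  induction i using Fin.addCases with
  | left i => simpa using h i
  | right i => simpa using h' i

end Regular

/-- Regular maps form a subtheory of the Lawvere theory of the monad
`X ↦ Set (Σ* × X)`: they contain the Kleisli identities and are closed under
Kleisli composition and cotupling. -/
theorem stmt6 {σ : Type*} :
    (∀ p : ℕ, Regular (fun i : Fin p => ({([], i)} : Set (List σ × Fin p)))) ∧
    (∀ (p k q : ℕ) (r₁ : Fin p → Set (List σ × Fin k))
      (r₂ : Fin k → Set (List σ × Fin q)),
      Regular r₁ → Regular r₂ →
      Regular (fun i : Fin p => {wj : List σ × Fin q |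
        ∃ (v w : List σ) (m : Fin k), wj.1 = v ++ w ∧ (v, m) ∈ r₁ i ∧ (w, wj.2) ∈ r₂ m})) ∧
    (∀ (p p' q : ℕ) (r : Fin p → Set (List σ × Fin q))
      (r' : Fin p' → Set (List σ × Fin q)),
      Regular r → Regular r' →
      Regular (fun i : Fin (p + p') => Fin.addCases r r' i)) :=
  ⟨regular_singleton_nil, fun _ _ _ _ _ h₁ h₂ => h₁.kleisliComp h₂,
    fun _ _ _ _ _ h h' => h.addCases h'⟩
end

section
/- A tree language L ⊆ T_Σ is accepted by a state of a finite nondeterministic tree automaton (there exist n, α : Fin n → Set (Fin n × Σ × Fin n), F ⊆ Fin n and i ∈ Fin n with L = {t | t is accepted at i}) if and only if L is recognized by a finite deterministic algebra: there exist a finite type Q, a function δ : Q × Σ × Q → Q, an element q₀ ∈ Q and a subset T ⊆ Q such that L = {t | eval(t) ∈ T}, where eval is defined recursively by eval(leaf) = q₀ and eval(node(l, σ, r)) = δ(eval(l), σ, eval(r)). -/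
/-- Binary trees with `σ`-labelled inner nodes. -/
inductive BTree (σ : Type*) : Type _
  | leaf : BTree σ
  | node : BTree σ → σ → BTree σ → BTree σ

/-- Inductive acceptance for a nondeterministic tree automaton. -/
inductive Accept {σ : Type*} {n : ℕ} (α : Fin n → Set (Fin n × σ × Fin n))
    (F : Set (Fin n)) : Fin n → BTree σ → Prop
  | leaf {i : Fin n} : i ∈ F → Accept α F i BTree.leaf
  | node {i j k : Fin n} {s : σ} {l r : BTree σ} :
      (j, s, k) ∈ α i → Accept α F j l → Accept α F k r →
      Accept α F i (BTree.node l s r)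

/-- Deterministic bottom-up evaluation of a tree in an algebra `(Q, δ, q₀)`. -/
def evalT {σ Q : Type*} (δ : Q × σ × Q → Q) (q₀ : Q) : BTree σ → Q
  | BTree.leaf => q₀
  | BTree.node l s r => δ (evalT δ q₀ l, s, evalT δ q₀ r)

/-
Subset construction: evaluating a tree in the algebra of sets of states, where a pair of
state sets goes to the set of states having a matching transition into it, yields exactly
the set of states accepting the tree.

Conversely, an algebra `(Q, δ, q₀)` with target set `T` is simulated nondeterministically on
the states `Option Q`: at `some q` the automaton accepts the trees evaluating to `q`, at `none`
those evaluating into `T`; every transition guesses the values of both subtrees, and the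
guess is verified there since the subtrees are read at states of the form `some _`.
-/

section Accept

variable {σ : Type*} {n : ℕ} {α : Fin n → Set (Fin n × σ × Fin n)} {F : Set (Fin n)}

theorem accept_leaf_iff {i : Fin n} : Accept α F i .leaf ↔ i ∈ F :=
  ⟨fun | .leaf h => h, .leaf⟩

theorem accept_node_iff {i : Fin n} {l r : BTree σ} {s : σ} :
    Accept α F i (.node l s r) ↔
      ∃ j k, (j, s, k) ∈ α i ∧ Accept α F j l ∧ Accept α F k r :=
  ⟨fun | .node h hl hr => ⟨_, _, h, hl, hr⟩, fun ⟨_, _, h, hl, hr⟩ => .node h hl hr⟩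

end Accept

def subsetStep {σ : Type*} {n : ℕ} (α : Fin n → Set (Fin n × σ × Fin n)) :
    Set (Fin n) × σ × Set (Fin n) → Set (Fin n) :=
  fun p => {i | ∃ j ∈ p.1, ∃ k ∈ p.2.2, (j, p.2.1, k) ∈ α i}

theorem evalT_subsetStep {σ : Type*} {n : ℕ} (α : Fin n → Set (Fin n × σ × Fin n))
    (F : Set (Fin n)) (t : BTree σ) :
    evalT (subsetStep α) F t = {i | Accept α F i t} := by
  induction t with
  | leaf => ext i; exact accept_leaf_iff.symm
  | node l s r ihl ihr =>
    ext i
    simp only [evalT, subsetStep, ihl, ihr, Set.mem_ofPred_eq, accept_node_iff]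
    constructor
    · rintro ⟨j, hj, k, hk, h⟩; exact ⟨j, k, h, hj, hk⟩
    · rintro ⟨j, k, h, hj, hk⟩; exact ⟨j, hj, k, hk, h⟩

def observeTrans {σ Q : Type*} {n : ℕ} (δ : Q × σ × Q → Q) (ι : Q → Fin n)
    (P : Fin n → Q → Prop) (i : Fin n) : Set (Fin n × σ × Fin n) :=
  Prod.map ι (Prod.map id ι) '' {x | P i (δ x)}

theorem accept_observe_iff {σ Q : Type*} {n : ℕ} (δ : Q × σ × Q → Q) (q₀ : Q)
    (ι : Q → Fin n) (P : Fin n → Q → Prop) (hP : ∀ a q, P (ι a) q ↔ q = a)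
    (t : BTree σ) (i : Fin n) :
    Accept (observeTrans δ ι P) {j | P j q₀} i t ↔ P i (evalT δ q₀ t) := by
  induction t generalizing i with
  | leaf => exact accept_leaf_iff
  | node l s r ihl ihr =>
    simp only [accept_node_iff, observeTrans, Set.mem_image, Set.mem_ofPred_eq, Prod.exists,
      Prod.map_apply, id, Prod.mk.injEq, evalT]
    constructor
    · rintro ⟨_, _, ⟨a, s, b, h, rfl, rfl, rfl⟩, hl, hr⟩
      rw [ihl, hP] at hl
      rw [ihr, hP] at hr
      rwa [hl, hr]
    · intro h
      refine ⟨_, _, ⟨_, s, _, h, rfl, rfl, rfl⟩, ?_, ?_⟩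
      · rw [ihl, hP]
      · rw [ihr, hP]

theorem stmt10_general {σ : Type} (L : Set (BTree σ)) :
    (∃ (n : ℕ) (α : Fin n → Set (Fin n × σ × Fin n)) (F : Set (Fin n)) (i : Fin n),
      L = {t : BTree σ | Accept α F i t}) ↔
    (∃ (Q : Type) (_ : Fintype Q) (δ : Q × σ × Q → Q) (q₀ : Q) (T : Set Q),
      L = {t : BTree σ | evalT δ q₀ t ∈ T}) := by
  classical
  constructor
  · rintro ⟨n, α, F, i, rfl⟩
    refine ⟨Set (Fin n), inferInstance, subsetStep α, F, {A | i ∈ A}, ?_⟩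
    simp only [evalT_subsetStep, Set.mem_ofPred_eq]
  · rintro ⟨Q, _, δ, q₀, T, rfl⟩
    let e := Fintype.equivFin (Option Q)
    let P : Fin _ → Q → Prop := fun i q => (e.symm i).elim (q ∈ T) (q = ·)
    have hP : ∀ a q, P (e (some a)) q ↔ q = a := by simp [P]
    refine ⟨_, observeTrans δ (e ∘ some) P, {j | P j q₀}, e none, ?_⟩
    ext t
    rw [Set.mem_ofPred_eq, Set.mem_ofPred_eq, accept_observe_iff δ q₀ (e ∘ some) P hP]
    simp [P]

/-- A tree language is accepted by a state of a finite nondeterministic tree automaton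
iff it is recognized by a finite deterministic algebra. -/
theorem stmt10 {σ : Type} [Fintype σ] [Nonempty σ] (L : Set (BTree σ)) :
    (∃ (n : ℕ) (α : Fin n → Set (Fin n × σ × Fin n)) (F : Set (Fin n)) (i : Fin n),
      L = {t : BTree σ | Accept α F i t}) ↔
    (∃ (Q : Type) (_ : Fintype Q) (δ : Q × σ × Q → Q) (q₀ : Q) (T : Set Q),
      L = {t : BTree σ | evalT δ q₀ t ∈ T}) :=
  stmt10_general L
end

section
/- Let Q be a unital quantale and α : Fin n → (Σ × Fin n → Q) a fuzzy automaton. Define α̂ : Fin n → (Σ* × Fin n → Q) by α̂(i)([σ], j) = α(i)(σ, j) and α̂(i)(w, j) = ⊥ for words w of length ≠ 1. Among all β : Fin n → (Σ* × Fin n → Q) (ordered pointwise) satisfying (a) 1 ≤ β(i)(ε, i) for all i, (b) α̂ ≤ β, and (c) β(i)(v, j) · β(j)(w, k) ≤ β(i)(v ++ w, k) for all i, j, k and words v, w, there is a least one β*, given explicitly by β*(i)(σ₁…σ_k, j) = ⨆ over tuples (j₁, …, j_{k−1}) ∈ (Fin n)^{k−1} of the product α(i)(σ₁, j₁) · α(j₁)(σ₂,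 j₂) · ⋯ · α(j_{k−1})(σ_k, j) (with β*(i)(ε, j) = 1 if i = j and ⊥ otherwise). Moreover, for every χ : Fin n → Q, the saturation-based language ⨆_{j} β*(i)(w, j) · χ(j) equals the classical fuzzy-automaton language ⨆_{(j₁,…,j_k)} α(i)(σ₁, j₁) · ⋯ · α(j_{k−1})(σ_k, j_k) · χ(j_k) for w = σ₁…σ_k (and equals χ(i) for w = ε). -/
/-- The embedding `α̂` of a fuzzy automaton into maps on words: it agrees with `α`
on single-letter words and is `⊥` elsewhere. -/
def hatW {Q σ : Type*} [Bot Q] {n : ℕ} (α : Fin n → σ × Fin n → Q)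
    (i : Fin n) : List σ × Fin n → Q
  | ([a], j) => α i (a, j)
  | _ => ⊥

/-- `SatW α β` says that `β` contains the Kleisli identity, dominates `α̂`, and is
closed under Kleisli composition of the lifted free-monoid monad. -/
def SatW {Q σ : Type*} [CompleteLattice Q] [Monoid Q] {n : ℕ}
    (α : Fin n → σ × Fin n → Q) (β : Fin n → List σ × Fin n → Q) : Prop :=
  (∀ i : Fin n, 1 ≤ β i ([], i)) ∧
  (∀ (i : Fin n) (p : List σ × Fin n), hatW α i p ≤ β i p) ∧
  (∀ (i j k : Fin n) (v w : List σ), β i (v, j) * β j (w, k) ≤ β i (v ++ w, k))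

/-- The explicit saturation `β*`: the supremum over all chains of intermediate
states of the product of the transition weights. -/
noncomputable def bstarW {Q σ : Type*} [CompleteLattice Q] [Monoid Q] {n : ℕ}
    (α : Fin n → σ × Fin n → Q) (i : Fin n) (p : List σ × Fin n) : Q :=
  ⨆ c : Fin (p.1.length + 1) → Fin n,
    ⨆ _ : c 0 = i ∧ c (Fin.last p.1.length) = p.2,
      (List.ofFn fun l : Fin p.1.length => α (c l.castSucc) (p.1.get l, c l.succ)).prod

/-- The classical language of a fuzzy automaton with final fuzzy set `χ`. -/
noncomputable def clangW {Q σ : Type*} [CompleteLattice Q] [Monoid Q] {n : ℕ}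
    (α : Fin n → σ × Fin n → Q) (χ : Fin n → Q) (i : Fin n) (w : List σ) : Q :=
  ⨆ c : Fin (w.length + 1) → Fin n,
    ⨆ _ : c 0 = i,
      (List.ofFn fun l : Fin w.length => α (c l.castSucc) (w.get l, c l.succ)).prod *
        χ (c (Fin.last w.length))

/-!
Multiplication distributes over suprema, so peeling off the first letter of a run gives
`β* i (a :: w, j) = ⨆ k, α i (a, k) * β* k (w, j)`. With this recursion, closure of `β*` under
composition and its minimality among saturated maps both follow by induction on the word, and the
language identity only regroups the supremum over runs according to their last state.
-/

namespace Quantale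

variable {Q : Type*} [Semigroup Q] [CompleteLattice Q] [IsQuantale Q]

theorem mul_iSup_distrib_sort {ι : Sort*} (x : Q) (f : ι → Q) : x * ⨆ i, f i = ⨆ i, x * f i := by
  rw [← iSup_plift_down, mul_iSup_distrib, iSup_plift_down fun i => x * f i]

theorem iSup_mul_distrib_sort {ι : Sort*} (x : Q) (f : ι → Q) : (⨆ i, f i) * x = ⨆ i, f i * x := by
  rw [← iSup_plift_down, iSup_mul_distrib, iSup_plift_down fun i => f i * x]

end Quantale

open Quantale

section

variable {Q σ : Type*} {n : ℕ}

def pathWeight [Monoid Q] (α : Fin n → σ × Fin n → Q) (w : List σ)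
    (c : Fin (w.length + 1) → Fin n) : Q :=
  (List.ofFn fun l : Fin w.length => α (c l.castSucc) (w.get l, c l.succ)).prod

theorem pathWeight_cons [Monoid Q] (α : Fin n → σ × Fin n → Q) (a : σ) (w : List σ)
    (c : Fin (w.length + 2) → Fin n) :
    pathWeight α (a :: w) c = α (c 0) (a, c 1) * pathWeight α w (Fin.tail c) := by
  rw [pathWeight, List.ofFn_succ, List.prod_cons]
  rfl

variable [CompleteLattice Q] [Monoid Q]

theorem bstarW_eq_iSup_pathWeight (α : Fin n → σ × Fin n → Q) (i j : Fin n) (w : List σ) :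
    bstarW α i (w, j) =
      ⨆ c : Fin (w.length + 1) → Fin n, ⨆ _ : c 0 = i ∧ c (Fin.last _) = j, pathWeight α w c :=
  rfl

theorem clangW_eq_iSup_pathWeight (α : Fin n → σ × Fin n → Q) (χ : Fin n → Q) (i : Fin n)
    (w : List σ) :
    clangW α χ i w =
      ⨆ c : Fin (w.length + 1) → Fin n, ⨆ _ : c 0 = i, pathWeight α w c * χ (c (Fin.last _)) :=
  rfl

theorem bstarW_nil (α : Fin n → σ × Fin n → Q) (i j : Fin n) :
    bstarW α i (([] : List σ), j) = if i = j then 1 else ⊥ := by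
  rw [bstarW_eq_iSup_pathWeight]
  split_ifs with h
  · subst h
    exact le_antisymm (iSup₂_le fun _ _ => le_rfl) (le_iSup₂_of_le (fun _ => i) ⟨rfl, rfl⟩ le_rfl)
  · exact le_bot_iff.mp (iSup₂_le fun c hc => absurd (hc.1 ▸ hc.2) h)

variable [IsQuantale Q]

theorem bstarW_cons (α : Fin n → σ × Fin n → Q) (i j : Fin n) (a : σ) (w : List σ) :
    bstarW α i (a :: w, j) = ⨆ k, α i (a, k) * bstarW α k (w, j) := by
  simp only [bstarW_eq_iSup_pathWeight, mul_iSup_distrib_sort]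
  rw [← (Fin.consEquiv fun _ => Fin n).iSup_comp]
  simp only [List.length_cons, Fin.consEquiv, Equiv.coe_fn_mk, Fin.cons_zero, Fin.cons_last,
    pathWeight_cons, Fin.cons_one, Fin.tail_cons, iSup_and, iSup_prod]
  -- both sides range over runs `c` of `w` ending in `j`; eliminating the equations for the
  -- initial state (left) and for `k = c 0` (right) leaves `α i (a, c 0) * pathWeight α w c`
  conv_lhs => rw [iSup_comm]; enter [1, c]; rw [iSup_iSup_eq_left]
  conv_rhs => rw [iSup_comm]; enter [1, c]; rw [iSup_iSup_eq_right]

theorem le_bstarW_singleton (α : Fin n → σ × Fin n → Q) (i j : Fin n) (a : σ) :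
    α i (a, j) ≤ bstarW α i ([a], j) := by
  rw [bstarW_cons]
  exact le_iSup_of_le j (by rw [bstarW_nil, if_pos rfl, mul_one])

theorem hatW_le_bstarW (α : Fin n → σ × Fin n → Q) (i : Fin n) :
    ∀ p : List σ × Fin n, hatW α i p ≤ bstarW α i p
  | ([a], j) => le_bstarW_singleton α i j a
  | ([], _) | (_ :: _ :: _, _) => bot_le

theorem bstarW_mul_le_append (α : Fin n → σ × Fin n → Q) (i j k : Fin n) (v w : List σ) :
    bstarW α i (v, j) * bstarW α j (w, k) ≤ bstarW α i (v ++ w, k) := by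
  induction v generalizing i with
  | nil =>
    rw [bstarW_nil]
    split_ifs with h
    · rw [h, one_mul]; rfl
    · rw [bot_mul]; exact bot_le
  | cons a v ih =>
    rw [bstarW_cons, iSup_mul_distrib, List.cons_append, bstarW_cons]
    refine iSup_mono fun m => ?_
    rw [mul_assoc]
    exact mul_le_mul_right (ih m) _

theorem satW_bstarW (α : Fin n → σ × Fin n → Q) : SatW α (bstarW α) :=
  ⟨fun i => by rw [bstarW_nil, if_pos rfl], hatW_le_bstarW α, bstarW_mul_le_append α⟩

theorem bstarW_le_of_satW {α : Fin n → σ × Fin n → Q} {β : Fin n → List σ × Fin n → Q}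
    (hβ : SatW α β) (i : Fin n) (p : List σ × Fin n) : bstarW α i p ≤ β i p := by
  obtain ⟨hone, hhat, hmul⟩ := hβ
  obtain ⟨w, j⟩ := p
  induction w generalizing i with
  | nil =>
    rw [bstarW_nil]
    split_ifs with h
    · exact h ▸ hone i
    · exact bot_le
  | cons a w ih =>
    rw [bstarW_cons]
    refine iSup_le fun m => ?_
    calc α i (a, m) * bstarW α m (w, j) ≤ β i ([a], m) * β m (w, j) :=
          mul_le_mul' (hhat i ([a], m)) (ih m)
      _ ≤ β i ([a] ++ w, j) := hmul i m j [a] w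

theorem iSup_bstarW_mul_eq_clangW (α : Fin n → σ × Fin n → Q) (χ : Fin n → Q) (i : Fin n)
    (w : List σ) : ⨆ j, bstarW α i (w, j) * χ j = clangW α χ i w := by
  simp only [bstarW_eq_iSup_pathWeight, clangW_eq_iSup_pathWeight, iSup_mul_distrib_sort, iSup_and]
  rw [iSup_comm]
  refine iSup_congr fun c => ?_
  rw [iSup_comm]
  refine iSup_congr fun _ => ?_
  exact iSup_iSup_eq_right

end

/-- In a unital quantale, `β*` is the least map containing the Kleisli identity,
dominating `α̂`, and closed under Kleisli composition; moreover the saturation-based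
language coincides with the classical fuzzy-automaton language. -/
theorem stmt12 {Q σ : Type*} [CompleteLattice Q] [Monoid Q]
    (hd₁ : ∀ (x : Q) (S : Set Q), x * sSup S = ⨆ y ∈ S, x * y)
    (hd₂ : ∀ (x : Q) (S : Set Q), sSup S * x = ⨆ y ∈ S, y * x)
    {n : ℕ} (α : Fin n → σ × Fin n → Q) :
    (SatW α (bstarW α) ∧
      (∀ β : Fin n → List σ × Fin n → Q, SatW α β →
        ∀ (i : Fin n) (p : List σ × Fin n), bstarW α i p ≤ β i p)) ∧
    (∀ (χ : Fin n → Q) (i : Fin n) (w : List σ),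
      (⨆ j : Fin n, bstarW α i (w, j) * χ j) = clangW α χ i w) := by
  have : IsQuantale Q := ⟨hd₁, fun S x => hd₂ x S⟩
  exact ⟨⟨satW_bstarW α, fun _ hβ => bstarW_le_of_satW hβ⟩, iSup_bstarW_mul_eq_clangW α⟩
end

section
/- Let Σ be a type and let a : T_Σ X → Set X satisfy the Eilenberg–Moore laws for the lifted binary-tree monad: a(leaf x) = {x} for all x ∈ X, and for every tree t whose leaves are themselves trees over X, a(flatten t) = ⋃ { a(t') | t' is obtained from t by replacing each leaf s of t by some element of a(s) }. Then a is determined by its restriction to one-node trees: setting â(y, σ, z) := a(node(leaf y, σ, leaf z)), one has, for every tree t ∈ T_Σ X, a(t) = E(t), where E is defined by structural recursion E(leaf x) = {x} and E(node(l, σ, r)) = ⋃_{y ∈ E(l)} ⋃_{z ∈ E(r)} â(y, σ, z). -/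
/-- Binary trees with `σ`-labelled inner nodes and leaves in `X`. -/
inductive TreeL (σ : Type*) (X : Type*) : Type _
  | leaf : X → TreeL σ X
  | node : TreeL σ X → σ → TreeL σ X → TreeL σ X

/-- Grafting (the multiplication of the free tree monad): flatten a tree whose
leaves are trees. -/
def flattenT {σ X : Type*} : TreeL σ (TreeL σ X) → TreeL σ X
  | TreeL.leaf t => t
  | TreeL.node l s r => TreeL.node (flattenT l) s (flattenT r)

/-- `Repl a t t'` holds iff `t'` is obtained from `t` by replacing each leaf `s`
of `t` by (a leaf carrying) some element of `a s`. -/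
inductive Repl {σ X : Type*} (a : TreeL σ X → Set X) :
    TreeL σ (TreeL σ X) → TreeL σ X → Prop
  | leaf {s : TreeL σ X} {x : X} : x ∈ a s → Repl a (TreeL.leaf s) (TreeL.leaf x)
  | node {l r : TreeL σ (TreeL σ X)} {l' r' : TreeL σ X} {s : σ} :
      Repl a l l' → Repl a r r' → Repl a (TreeL.node l s r) (TreeL.node l' s r')

/-- Structural-recursion evaluation determined by the one-node restriction `â`. -/
def evalE {σ X : Type*} (ah : X → σ → X → Set X) : TreeL σ X → Set X
  | TreeL.leaf x => {x}
  | TreeL.node l s r => ⋃ y ∈ evalE ah l, ⋃ z ∈ evalE ah r, ah y s z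

/-! Grafting the two trees `l` and `r` into the one-node tree `node (leaf l) s (leaf r)` gives
`node l s r`, so the multiplication law computes `a (node l s r)` from `a l`, `a r` and the values
of `a` on one-node trees. This is exactly the recursion defining `evalE`. -/

namespace TreeL

variable {σ X : Type*}

theorem repl_node_leaf_iff (a : TreeL σ X → Set X) (l r : TreeL σ X) (s : σ) (t : TreeL σ X) :
    Repl a (node (leaf l) s (leaf r)) t ↔
      ∃ y ∈ a l, ∃ z ∈ a r, t = node (leaf y) s (leaf z) := by
  constructor
  · rintro (_ | ⟨(@⟨_, y, hy⟩), (@⟨_, z, hz⟩)⟩)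
    exact ⟨y, hy, z, hz, rfl⟩
  · rintro ⟨y, hy, z, hz, rfl⟩
    exact .node (.leaf hy) (.leaf hz)

theorem apply_node_eq_biUnion (a : TreeL σ X → Set X)
    (hflatten : ∀ t : TreeL σ (TreeL σ X),
      a (flattenT t) = ⋃ t' ∈ {t' : TreeL σ X | Repl a t t'}, a t')
    (l r : TreeL σ X) (s : σ) :
    a (node l s r) = ⋃ y ∈ a l, ⋃ z ∈ a r, a (node (leaf y) s (leaf z)) := by
  have hgraft := hflatten (node (leaf l) s (leaf r))
  simp only [flattenT] at hgraft
  ext w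
  simp only [hgraft, Set.mem_ofPred_eq, repl_node_leaf_iff, Set.mem_iUnion, exists_prop]
  constructor
  · rintro ⟨_, ⟨y, hy, z, hz, rfl⟩, hw⟩
    exact ⟨y, hy, z, hz, hw⟩
  · rintro ⟨y, hy, z, hz, hw⟩
    exact ⟨_, ⟨y, hy, z, hz, rfl⟩, hw⟩

end TreeL

/-- An Eilenberg–Moore algebra for the lifted binary-tree monad is determined by its
restriction to one-node trees via structural recursion. -/
theorem stmt17 {σ X : Type*} (a : TreeL σ X → Set X)
    (h1 : ∀ x : X, a (TreeL.leaf x) = {x})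
    (h2 : ∀ t : TreeL σ (TreeL σ X),
      a (flattenT t) = ⋃ t' ∈ {t' : TreeL σ X | Repl a t t'}, a t') :
    ∀ t : TreeL σ X,
      a t = evalE (fun y s z => a (TreeL.node (TreeL.leaf y) s (TreeL.leaf z))) t := by
  intro t
  induction t with
  | leaf x => rw [h1, evalE]
  | node l s r ihl ihr => rw [TreeL.apply_node_eq_biUnion a h2, ihl, ihr, evalE]
end
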